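/- For jointly distributed discrete random variables X, J1, E^n where J1–X^n–E^n is a Markov chain and (X_i,E_i) are i.i.d., the following decomposition holds: H(X^n|J1) − I(X^n;E^n) + I(J1;E^n) ≤ Σ_{i=1}^n [ H(X_i|J1,X^{i-1}) − I(X_i;E_i|J1,X^{i-1}) ], where the inequality uses I(J1,X^{i-1},E^{i-1};E_i) ≥ I(J1,E^{i-1};E_i) and the Markov chain E_i–X_i–(J1,X^{i-1})–E^{i-1}. -/

import Mathlib

/-!
Under the Markov condition `I(J1; E^n | X^n) = 0` the left-hand side equals `H(X^n | J1, E^n)`.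
The chain rule splits this into `∑ H(X_i | J1, E^n, X^{i-1})`, and since `(E_i, J1, X^{i-1})` is a
function of `(J1, E^n, X^{i-1})`, each term is at most
`H(X_i | E_i, J1, X^{i-1}) = H(X_i | J1, X^{i-1}) - I(X_i; E_i | J1, X^{i-1})`.
The only inequality needed is `I(X; Y | Z) ≥ 0`, which follows from `log x ≤ x - 1`.
-/

open Real Finset

/-- Probability that the random variable `X` takes value `a`, under pmf `p` on `Ω`. -/
noncomputable def distOf {Ω A : Type*} [Fintype Ω] [DecidableEq A] (p : Ω → ℝ) (X : Ω → A)
    (a : A) : ℝ :=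
  ∑ ω ∈ Finset.univ.filter (fun ω => X ω = a), p ω

/-- Shannon entropy (natural log) of a discrete random variable. -/
noncomputable def Hd {Ω A : Type*} [Fintype Ω] [Fintype A] [DecidableEq A]
    (p : Ω → ℝ) (X : Ω → A) : ℝ :=
  -∑ a : A, distOf p X a * Real.log (distOf p X a)

/-- Conditional entropy H(X|Y). -/
noncomputable def CHd {Ω A B : Type*} [Fintype Ω] [Fintype A] [DecidableEq A]
    [Fintype B] [DecidableEq B] (p : Ω → ℝ) (X : Ω → A) (Y : Ω → B) : ℝ :=
  Hd p (fun ω => (X ω, Y ω)) - Hd p Y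

/-- Mutual information I(X;Y). -/
noncomputable def MId {Ω A B : Type*} [Fintype Ω] [Fintype A] [DecidableEq A]
    [Fintype B] [DecidableEq B] (p : Ω → ℝ) (X : Ω → A) (Y : Ω → B) : ℝ :=
  Hd p X + Hd p Y - Hd p (fun ω => (X ω, Y ω))

/-- Conditional mutual information I(X;Y|Z). -/
noncomputable def CMId {Ω A B C : Type*} [Fintype Ω] [Fintype A] [DecidableEq A]
    [Fintype B] [DecidableEq B] [Fintype C] [DecidableEq C]
    (p : Ω → ℝ) (X : Ω → A) (Y : Ω → B) (Z : Ω → C) : ℝ :=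
  Hd p (fun ω => (X ω, Z ω)) + Hd p (fun ω => (Y ω, Z ω))
    - Hd p (fun ω => (X ω, Y ω, Z ω)) - Hd p Z

lemma sub_div_le_mul_log {c a b d : ℝ} (hc : 0 ≤ c) (ha : c ≤ a) (hb : c ≤ b) (hd : c ≤ d) :
    c - a * b / d ≤ c * (log c + log d - log a - log b) := by
  rcases hc.eq_or_lt with rfl | hc
  · have : 0 ≤ a * b / d := by positivity
    simpa using this
  have ha := hc.trans_le ha
  have hb := hc.trans_le hb
  have hd := hc.trans_le hd
  have hlog := one_sub_inv_le_log_of_pos (show 0 < c * d / (a * b) by positivity)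
  rw [inv_div, log_div (by positivity) (by positivity), log_mul hc.ne' hd.ne',
    log_mul ha.ne' hb.ne'] at hlog
  have := mul_le_mul_of_nonneg_left hlog hc.le
  have hcancel : c * (a * b / (c * d)) = a * b / d := by field_simp
  rw [mul_one_sub, hcancel] at this
  linarith

section
variable {Ω A B C : Type*} [Fintype Ω] {p : Ω → ℝ}

lemma distOf_nonneg (hp : ∀ ω, 0 ≤ p ω) [DecidableEq A] (X : Ω → A) (a : A) :
    0 ≤ distOf p X a :=
  Finset.sum_nonneg fun ω _ => hp ω

lemma distOf_le_distOf_comp (hp : ∀ ω, 0 ≤ p ω) [DecidableEq A] [DecidableEq B]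
    (X : Ω → A) (f : A → B) (a : A) :
    distOf p X a ≤ distOf p (fun ω => f (X ω)) (f a) :=
  Finset.sum_le_sum_of_subset_of_nonneg
    (Finset.monotone_filter_right _ fun _ _ h => congrArg f h) fun ω _ _ => hp ω

variable [Fintype A] [DecidableEq A]

lemma sum_mul_comp_eq_sum_distOf (X : Ω → A) (G : A → ℝ) :
    ∑ ω, p ω * G (X ω) = ∑ a, distOf p X a * G a := by
  simp only [distOf, Finset.sum_mul]
  rw [← Finset.sum_fiberwise Finset.univ X]
  exact Finset.sum_congr rfl fun a _ => Finset.sum_congr rfl fun ω hω => by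
    rw [(Finset.mem_filter.1 hω).2]

lemma sum_distOf (X : Ω → A) : ∑ a, distOf p X a = ∑ ω, p ω := by
  simpa using (sum_mul_comp_eq_sum_distOf (p := p) X fun _ => 1).symm

lemma Hd_eq_neg_sum_mul_log (X : Ω → A) :
    Hd p X = -∑ ω, p ω * log (distOf p X (X ω)) := by
  rw [Hd, sum_mul_comp_eq_sum_distOf X fun a => log (distOf p X a)]

lemma Hd_comp_eq (X : Ω → A) [Fintype B] [DecidableEq B] (f : A → B) :
    Hd p (fun ω => f (X ω))
      = -∑ a, distOf p X a * log (distOf p (fun ω => f (X ω)) (f a)) := by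
  rw [Hd_eq_neg_sum_mul_log, sum_mul_comp_eq_sum_distOf X fun a => log (distOf p _ (f a))]

lemma Hd_congr [Fintype B] [DecidableEq B] {X : Ω → A} {Y : Ω → B}
    (h : ∀ ω ω', X ω = X ω' ↔ Y ω = Y ω') : Hd p X = Hd p Y := by
  have hdist : ∀ ω, distOf p X (X ω) = distOf p Y (Y ω) := fun ω =>
    Finset.sum_congr (Finset.filter_congr fun ω' _ => h ω' ω) fun _ _ => rfl
  simp only [Hd_eq_neg_sum_mul_log, hdist]

lemma sum_distOf_pair_left [DecidableEq B] (X : Ω → A) (Y : Ω → B) (b : B) :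
    ∑ a, distOf p (fun ω => (X ω, Y ω)) (a, b) = distOf p Y b := by
  rw [distOf, ← Finset.sum_fiberwise _ X]
  refine Finset.sum_congr rfl fun a _ => ?_
  rw [distOf, Finset.filter_filter]
  exact Finset.sum_congr (Finset.filter_congr fun ω _ => by rw [Prod.mk.injEq, and_comm])
    fun _ _ => rfl

variable [Fintype B] [DecidableEq B] [Fintype C] [DecidableEq C]

lemma CMId_eq_sum_mul_log (X : Ω → A) (Y : Ω → B) (Z : Ω → C) :
    CMId p X Y Z = ∑ t : A × B × C, distOf p (fun ω => (X ω, Y ω, Z ω)) t *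
      (log (distOf p (fun ω => (X ω, Y ω, Z ω)) t) + log (distOf p Z t.2.2)
        - log (distOf p (fun ω => (X ω, Z ω)) (t.1, t.2.2))
        - log (distOf p (fun ω => (Y ω, Z ω)) t.2)) := by
  set XYZ := fun ω => (X ω, Y ω, Z ω)
  rw [CMId, show Hd p (fun ω => (X ω, Z ω)) = _ from Hd_comp_eq XYZ fun t => (t.1, t.2.2),
    show Hd p (fun ω => (Y ω, Z ω)) = _ from Hd_comp_eq XYZ fun t => t.2,
    show Hd p Z = _ from Hd_comp_eq XYZ fun t => t.2.2, Hd]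
  simp only [mul_add, mul_sub, Finset.sum_add_distrib, Finset.sum_sub_distrib]
  ring

lemma CMId_nonneg (hp : ∀ ω, 0 ≤ p ω) (X : Ω → A) (Y : Ω → B) (Z : Ω → C) :
    0 ≤ CMId p X Y Z := by
  set c := distOf p (fun ω => (X ω, Y ω, Z ω))
  set a := distOf p (fun ω => (X ω, Z ω))
  set b := distOf p (fun ω => (Y ω, Z ω))
  set d := distOf p Z
  -- Gibbs' inequality compares `c` with `a * b / d`, a measure of the same total mass.
  have hsum : ∑ t : A × B × C, a (t.1, t.2.2) * b t.2 / d t.2.2 = ∑ t, c t := by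
    calc ∑ t : A × B × C, a (t.1, t.2.2) * b t.2 / d t.2.2
        = ∑ z, (∑ x, a (x, z)) * (∑ y, b (y, z)) / d z := by
          rw [Fintype.sum_prod_type_right, Fintype.sum_prod_type_right]
          refine Finset.sum_congr rfl fun z _ => ?_
          rw [Finset.sum_mul_sum, Finset.sum_div, Finset.sum_comm]
          simp only [Finset.sum_div]
      _ = ∑ t, c t := by
          simp only [a, b, d, c, sum_distOf_pair_left, mul_self_div_self, sum_distOf]
  rw [CMId_eq_sum_mul_log, ← sub_self (∑ t, c t)]
  nth_rewrite 2 [← hsum]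
  rw [← Finset.sum_sub_distrib]
  refine Finset.sum_le_sum fun t _ => sub_div_le_mul_log (distOf_nonneg hp _ _) ?_ ?_ ?_
  · exact distOf_le_distOf_comp hp _ (fun t => (t.1, t.2.2)) t
  · exact distOf_le_distOf_comp hp _ (fun t => t.2) t
  · exact distOf_le_distOf_comp hp _ (fun t => t.2.2) t

lemma CHd_le_CHd_comp (hp : ∀ ω, 0 ≤ p ω) (X : Ω → A) (Y : Ω → B) (g : B → C) :
    CHd p X Y ≤ CHd p X (fun ω => g (Y ω)) := by
  have h := CMId_nonneg hp X Y fun ω => g (Y ω)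
  have hY : Hd p (fun ω => (Y ω, g (Y ω))) = Hd p Y :=
    Hd_congr fun ω ω' => ⟨congrArg Prod.fst, fun h => by rw [h]⟩
  have hXY : Hd p (fun ω => (X ω, Y ω, g (Y ω))) = Hd p (fun ω => (X ω, Y ω)) :=
    Hd_congr fun ω ω' => by simp +contextual [Prod.ext_iff]
  rw [CMId, hY, hXY] at h
  rw [CHd, CHd]
  linarith

lemma CHd_sub_CMId (X : Ω → A) (Y : Ω → B) (Z : Ω → C) :
    CHd p X Z - CMId p X Y Z = CHd p X (fun ω => (Y ω, Z ω)) := by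
  rw [CHd, CHd, CMId]
  ring

lemma CHd_sub_MId_add_MId_of_CMId_eq_zero {X : Ω → A} {J : Ω → B} {E : Ω → C}
    (h : CMId p J E X = 0) :
    CHd p X J - MId p X E + MId p J E = CHd p X (fun ω => (J ω, E ω)) := by
  have hXJ : Hd p (fun ω => (X ω, J ω)) = Hd p (fun ω => (J ω, X ω)) :=
    Hd_congr fun ω ω' => by simp [and_comm]
  have hXE : Hd p (fun ω => (X ω, E ω)) = Hd p (fun ω => (E ω, X ω)) :=
    Hd_congr fun ω ω' => by simp [and_comm]
  have hXJE : Hd p (fun ω => (X ω, J ω, E ω)) = Hd p (fun ω => (J ω, E ω, X ω)) :=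
    Hd_congr fun ω ω' => by simp only [Prod.mk.injEq]; tauto
  rw [CMId] at h
  rw [CHd, CHd, MId, MId, hXJ, hXE]
  linarith

theorem CHd_pi_eq_sum_CHd (W : Ω → B) :
    ∀ {n : ℕ} (Xs : Fin n → Ω → A), CHd p (fun ω i => Xs i ω) W
      = ∑ i : Fin n, CHd p (Xs i)
          (fun ω => (W ω, fun j : Fin i.val => Xs ⟨j.val, j.isLt.trans i.isLt⟩ ω))
  | 0, Xs => by
    rw [Finset.univ_eq_empty, Finset.sum_empty, CHd, sub_eq_zero]
    exact Hd_congr fun ω ω' => by simp [Prod.ext_iff, funext_iff]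
  | n + 1, Xs => by
    have ih : CHd p (fun ω (i : Fin n) => Xs i.castSucc ω) W
        = ∑ i : Fin n, CHd p (Xs i.castSucc)
            (fun ω => (W ω,
              fun j : Fin i.castSucc.val => Xs ⟨j.val, j.isLt.trans i.castSucc.isLt⟩ ω)) :=
      CHd_pi_eq_sum_CHd W fun i => Xs i.castSucc
    rw [Fin.sum_univ_castSucc, ← ih]
    have hlast : Hd p (fun ω => ((fun i => Xs i ω), W ω))
        = Hd p (fun ω => (Xs (Fin.last n) ω, W ω,
            fun j : Fin (Fin.last n).val => Xs ⟨j.val, j.isLt.trans (Fin.last n).isLt⟩ ω)) :=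
      Hd_congr fun ω ω' => by simp [Prod.ext_iff, funext_iff, Fin.forall_fin_succ']; tauto
    have hswap : Hd p (fun ω => ((fun i : Fin n => Xs i.castSucc ω), W ω))
        = Hd p (fun ω => (W ω,
            fun j : Fin (Fin.last n).val => Xs ⟨j.val, j.isLt.trans (Fin.last n).isLt⟩ ω)) :=
      Hd_congr fun ω ω' => by simp only [Prod.mk.injEq]; exact and_comm
    rw [CHd, CHd, CHd, hlast, hswap]
    ring

end

theorem stmt9_general {Ω 𝒳 ℰ 𝒥 : Type*} [Fintype Ω]
    [Fintype 𝒳] [DecidableEq 𝒳] [Fintype ℰ] [DecidableEq ℰ] [Fintype 𝒥] [DecidableEq 𝒥]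
    (n : ℕ)
    (p : Ω → ℝ) (hp : ∀ ω, 0 ≤ p ω)
    (Xs : Fin n → Ω → 𝒳) (Es : Fin n → Ω → ℰ) (J1 : Ω → 𝒥)
    -- Markov chain J1 - X^n - E^n:
    (hMarkov : CMId p J1 (fun ω => fun i => Es i ω) (fun ω => fun i => Xs i ω) = 0) :
    CHd p (fun ω => fun i => Xs i ω) J1
        - MId p (fun ω => fun i => Xs i ω) (fun ω => fun i => Es i ω)
        + MId p J1 (fun ω => fun i => Es i ω)
      ≤ ∑ i : Fin n,
          (CHd p (Xs i)
              (fun ω => (J1 ω, fun j : Fin i.val => Xs ⟨j.val, j.isLt.trans i.isLt⟩ ω))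
            - CMId p (Xs i) (Es i)
              (fun ω => (J1 ω, fun j : Fin i.val => Xs ⟨j.val, j.isLt.trans i.isLt⟩ ω))) := by
  rw [CHd_sub_MId_add_MId_of_CMId_eq_zero hMarkov, CHd_pi_eq_sum_CHd]
  refine Finset.sum_le_sum fun i _ => ?_
  rw [CHd_sub_CMId]
  exact CHd_le_CHd_comp hp _ _
    fun w : (𝒥 × (Fin n → ℰ)) × (Fin i.val → 𝒳) => (w.1.2 i, w.1.1, w.2)

theorem stmt9 {Ω 𝒳 ℰ 𝒥 : Type*} [Fintype Ω]
    [Fintype 𝒳] [DecidableEq 𝒳] [Fintype ℰ] [DecidableEq ℰ] [Fintype 𝒥] [DecidableEq 𝒥]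
    (n : ℕ)
    (p : Ω → ℝ) (hp : ∀ ω, 0 ≤ p ω) (hp1 : ∑ ω, p ω = 1)
    (Xs : Fin n → Ω → 𝒳) (Es : Fin n → Ω → ℰ) (J1 : Ω → 𝒥)
    -- the pairs (X_i, E_i) are i.i.d. with common per-letter pmf q:
    (q : 𝒳 × ℰ → ℝ)
    (hiid : ∀ f : Fin n → 𝒳 × ℰ,
      distOf p (fun ω => fun i => (Xs i ω, Es i ω)) f = ∏ i, q (f i))
    -- Markov chain J1 - X^n - E^n:
    (hMarkov : CMId p J1 (fun ω => fun i => Es i ω) (fun ω => fun i => Xs i ω) = 0) :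
    CHd p (fun ω => fun i => Xs i ω) J1
        - MId p (fun ω => fun i => Xs i ω) (fun ω => fun i => Es i ω)
        + MId p J1 (fun ω => fun i => Es i ω)
      ≤ ∑ i : Fin n,
          (CHd p (Xs i)
              (fun ω => (J1 ω, fun j : Fin i.val => Xs ⟨j.val, j.isLt.trans i.isLt⟩ ω))
            - CMId p (Xs i) (Es i)
              (fun ω => (J1 ω, fun j : Fin i.val => Xs ⟨j.val, j.isLt.trans i.isLt⟩ ω))) :=
  stmt9_general n p hp Xs Es J1 hMarkov
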